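/- arXiv:1208.5683 — 2 statements merged into one kernel-verified Lean document; each statement's English description precedes it below -/
import Mathlib

section
/- Let C be a model category in which the class of trivial cofibrations is closed under pullback along fibrations, let f : B → A be a fibration, and suppose the pullback functor f* : C/A → C/B has a right adjoint Π_f. Then Π_f preserves fibrations: if p : X → B is a fibration (viewed as a fibrant object of C/B), then the structure map of Π_f(p) to A is a fibration in C. -/
open CategoryTheory CategoryTheory.Limits

universe v u v₂ u₂

/-- The class of morphisms having the left lifting property with respect to
every morphism in `M`. -/
def llp {C : Type u} [Category.{v} C] (M : MorphismProperty C) : MorphismProperty C :=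
  fun _ _ f => ∀ ⦃X Y : C⦄ (g : X ⟶ Y), M g → HasLiftingProperty f g

/-- The class of morphisms having the right lifting property with respect to
every morphism in `M`. -/
def rlp {C : Type u} [Category.{v} C] (M : MorphismProperty C) : MorphismProperty C :=
  fun _ _ g => ∀ ⦃A B : C⦄ (f : A ⟶ B), M f → HasLiftingProperty f g

/-- `(L, R)` is a weak factorization system: every morphism factors as a morphism
in `L` followed by one in `R`, and the two classes determine each other by the
lifting properties. -/
structure IsWFS {C : Type u} [Category.{v} C] (L R : MorphismProperty C) : Prop where
  factor : ∀ ⦃X Y : C⦄ (f : X ⟶ Y),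
    ∃ (Z : C) (i : X ⟶ Z) (p : Z ⟶ Y), L i ∧ R p ∧ i ≫ p = f
  llp_eq : L = llp R
  rlp_eq : R = rlp L

/-- A model structure on a category: classes of weak equivalences, cofibrations and
fibrations satisfying two-of-three and the two weak factorization system axioms. -/
structure ModelStructure (C : Type u) [Category.{v} C] where
  W : MorphismProperty C
  Cof : MorphismProperty C
  Fib : MorphismProperty C
  two_of_three_comp : ∀ ⦃X Y Z : C⦄ (f : X ⟶ Y) (g : Y ⟶ Z), W f → W g → W (f ≫ g)
  two_of_three_right : ∀ ⦃X Y Z : C⦄ (f : X ⟶ Y) (g : Y ⟶ Z), W f → W (f ≫ g) → W g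
  two_of_three_left : ∀ ⦃X Y Z : C⦄ (f : X ⟶ Y) (g : Y ⟶ Z), W g → W (f ≫ g) → W f
  wfs_cof_trivFib : IsWFS Cof (fun _ _ p => Fib p ∧ W p)
  wfs_trivCof_fib : IsWFS (fun _ _ i => Cof i ∧ W i) Fib

/-!
A lifting problem of a trivial cofibration `i : U ⟶ V` against `(Π_f p).hom`, with bottom
edge `v : V ⟶ A`, is the same as extending a map `i ≫ v ⟶ Π_f p` of `C/A` along `i`. By the
adjunction this is extending a map `f^* (i ≫ v) ⟶ p` of `C/B` along `f^* i`, i.e. a lifting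
problem of `(f^* i).left` against `p.hom`. Now `(f^* i).left` is the pullback of `i` along the
fibration `pullback.fst v f`, hence a trivial cofibration, and `p.hom` is a fibration.
-/

def ModelStructure.TrivCof {C : Type u} [Category.{v} C] (M : ModelStructure C) :
    MorphismProperty C :=
  fun _ _ i => M.Cof i ∧ M.W i

def ModelStructure.TrivCofStableUnderPullbackAlongFib {C : Type u} [Category.{v} C]
    (M : ModelStructure C) : Prop :=
  ∀ ⦃P X Y Z : C⦄ (fst : P ⟶ X) (snd : P ⟶ Y) (p : X ⟶ Z) (j : Y ⟶ Z),
    M.Fib p → M.Cof j → M.W j → IsPullback fst snd p j → M.Cof fst ∧ M.W fst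

namespace CategoryTheory

lemma Adjunction.surjective_comp_of_surjective_map_comp {D : Type u} [Category.{v} D]
    {E : Type u₂} [Category.{v₂} E] {F : D ⥤ E} {G : E ⥤ D} (adj : F ⊣ G) {P Q : D}
    (j : P ⟶ Q) (X : E) (h : Function.Surjective fun l : F.obj Q ⟶ X => F.map j ≫ l) :
    Function.Surjective fun l : Q ⟶ G.obj X => j ≫ l := by
  intro u
  obtain ⟨l, hl⟩ := h ((adj.homEquiv P X).symm u)
  refine ⟨adj.homEquiv Q X l, ?_⟩
  simp only [← adj.homEquiv_naturality_left, hl, Equiv.apply_symm_apply]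

namespace Over

variable {C : Type u} [Category.{v} C] {A : C}

lemma surjective_comp_of_hasLiftingProperty {P Q X : Over A} (j : P ⟶ Q)
    [HasLiftingProperty j.left X.hom] : Function.Surjective fun l : Q ⟶ X => j ≫ l := by
  intro u
  have sq : CommSq u.left j.left X.hom Q.hom := ⟨by rw [Over.w u, Over.w j]⟩
  exact ⟨Over.homMk sq.lift sq.fac_right, by ext; exact sq.fac_left⟩

lemma hasLiftingProperty_hom_of_surjective {U V : C} (i : U ⟶ V) (X : Over A)
    (h : ∀ v : V ⟶ A, Function.Surjective fun l : Over.mk v ⟶ X =>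
      (Over.homMk i : Over.mk (i ≫ v) ⟶ Over.mk v) ≫ l) :
    HasLiftingProperty i X.hom where
  sq_hasLift {u v} sq := by
    obtain ⟨l, hl⟩ := h v (Over.homMk u sq.w : Over.mk (i ≫ v) ⟶ X)
    exact ⟨⟨⟨l.left, congrArg CommaMorphism.left hl, Over.w l⟩⟩⟩

lemma isPullback_pullback_map_left {B : C} (f : B ⟶ A) [HasPullbacksAlong f] {P Q : Over A}
    (j : P ⟶ Q) :
    IsPullback ((Over.pullback f).map j).left (pullback.fst P.hom f) (pullback.fst Q.hom f)
      j.left := by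
  have hsnd : ((Over.pullback f).map j).left ≫ pullback.snd Q.hom f = pullback.snd P.hom f :=
    pullback.lift_snd _ _ _
  refine IsPullback.of_right ?_ (pullback.lift_fst _ _ _) (IsPullback.of_hasPullback Q.hom f).flip
  rw [hsnd, Over.w j]
  exact (IsPullback.of_hasPullback P.hom f).flip

end Over

end CategoryTheory

namespace ModelStructure

variable {C : Type u} [Category.{v} C] (M : ModelStructure C)

lemma fib_eq_rlp_trivCof : M.Fib = rlp M.TrivCof :=
  M.wfs_trivCof_fib.rlp_eq

lemma fib_pullback_fst {B A Y : C} {f : B ⟶ A} (hf : M.Fib f) (g : Y ⟶ A) [HasPullback g f] :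
    M.Fib (pullback.fst g f) := by
  rw [fib_eq_rlp_trivCof] at hf ⊢
  intro _ _ j hj
  have := hf j hj
  infer_instance

lemma trivCof_pullback_map_left (hstab : M.TrivCofStableUnderPullbackAlongFib) {B A : C}
    {f : B ⟶ A} [HasPullbacksAlong f] (hf : M.Fib f) {P Q : Over A} {j : P ⟶ Q}
    (hj : M.TrivCof j.left) : M.TrivCof ((Over.pullback f).map j).left :=
  hstab _ _ _ _ (M.fib_pullback_fst hf Q.hom) hj.1 hj.2 (Over.isPullback_pullback_map_left f j)

end ModelStructure

theorem pi_of_fibration_preserves_fibrations_general {C : Type u} [Category.{v} C]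
    [HasFiniteLimits C] (M : ModelStructure C)
    (hstab : ∀ ⦃P X Y Z : C⦄ (fst : P ⟶ X) (snd : P ⟶ Y) (p : X ⟶ Z) (j : Y ⟶ Z),
      M.Fib p → M.Cof j → M.W j → IsPullback fst snd p j → M.Cof fst ∧ M.W fst)
    {B A : C} (f : B ⟶ A) (hf : M.Fib f)
    (Pi : Over B ⥤ Over A) (adj : Over.pullback f ⊣ Pi)
    (p : Over B) (hp : M.Fib p.hom) :
    M.Fib (Pi.obj p).hom := by
  rw [M.fib_eq_rlp_trivCof] at hp ⊢
  intro U V i hi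
  refine Over.hasLiftingProperty_hom_of_surjective i _ fun v =>
    adj.surjective_comp_of_surjective_map_comp _ _ ?_
  have := hp _ (M.trivCof_pullback_map_left hstab hf
    (j := (Over.homMk i : Over.mk (i ≫ v) ⟶ Over.mk v)) hi)
  exact Over.surjective_comp_of_hasLiftingProperty _

/-- If trivial cofibrations are closed under pullback along fibrations and the
pullback functor along a fibration `f : B ⟶ A` has a right adjoint `Π_f`, then
`Π_f` preserves fibrations: it sends a fibration `p : X ⟶ B` (a fibrant object of
`C/B`) to an object of `C/A` whose structure map is a fibration. -/
theorem pi_of_fibration_preserves_fibrations {C : Type u} [Category.{v} C]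
    [HasFiniteLimits C] [HasFiniteColimits C] (M : ModelStructure C)
    (hstab : ∀ ⦃P X Y Z : C⦄ (fst : P ⟶ X) (snd : P ⟶ Y) (p : X ⟶ Z) (j : Y ⟶ Z),
      M.Fib p → M.Cof j → M.W j → IsPullback fst snd p j → M.Cof fst ∧ M.W fst)
    {B A : C} (f : B ⟶ A) (hf : M.Fib f)
    (Pi : Over B ⥤ Over A) (adj : Over.pullback f ⊣ Pi)
    (p : Over B) (hp : M.Fib p.hom) :
    M.Fib (Pi.obj p).hom :=
  pi_of_fibration_preserves_fibrations_general M hstab f hf Pi adj p hp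
end

section
/- Define the following classes of functions in the category of sets: W = all functions f such that either both the domain and codomain of f are empty or the domain is nonempty, Cof = injections, F = surjections together with all functions with empty domain. Then W satisfies two-of-three, and every function factors both as an injection in W followed by a map in F, and as an injection followed by a surjection in W. -/
universe u

/-- Weak equivalences of the minimal Cisinski model structure on sets: all maps
except those from the empty set to a nonempty set. -/
def cisinskiW {A B : Type u} (_ : A → B) : Prop :=
  (IsEmpty A ∧ IsEmpty B) ∨ Nonempty A

/-- Fibrations: surjections together with maps with empty domain. -/
def cisinskiF {A B : Type u} (f : A → B) : Prop :=
  Function.Surjective f ∨ IsEmpty A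

/-- The minimal Cisinski model structure on sets: the weak equivalences satisfy
two-of-three and every function factors as an injective weak equivalence followed
by a fibration, and as an injection followed by a surjective weak equivalence. -/
theorem minimal_cisinski_on_sets :
    (∀ {A B C : Type u} (f : A → B) (g : B → C),
        (cisinskiW f → cisinskiW g → cisinskiW (g ∘ f)) ∧
        (cisinskiW f → cisinskiW (g ∘ f) → cisinskiW g) ∧
        (cisinskiW g → cisinskiW (g ∘ f) → cisinskiW f)) ∧
    (∀ {A B : Type u} (f : A → B),
        ∃ (Z : Type u) (i : A → Z) (p : Z → B),
          Function.Injective i ∧ cisinskiW i ∧ cisinskiF p ∧ p ∘ i = f) ∧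
    (∀ {A B : Type u} (f : A → B),
        ∃ (Z : Type u) (i : A → Z) (p : Z → B),
          Function.Injective i ∧ Function.Surjective p ∧ cisinskiW p ∧ p ∘ i = f) := by
  refine ⟨fun {A B C} f g => ⟨?_, ?_, ?_⟩, fun {A B} f => ?_, fun {A B} f => ?_⟩
  · rintro (⟨hA, hB⟩ | hA) hg
    · rcases hg with ⟨hB', hC⟩ | hB'
      · exact Or.inl ⟨hA, hC⟩
      · exact (hB.false hB'.some).elim
    · exact Or.inr hA
  · rintro (⟨hA, hB⟩ | hA) hgf
    · rcases hgf with ⟨_, hC⟩ | hA'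
      · exact Or.inl ⟨hB, hC⟩
      · exact (hA.false hA'.some).elim
    · exact Or.inr ⟨f hA.some⟩
  · rintro hg hgf
    rcases hgf with ⟨hA, hC⟩ | hA
    · rcases hg with ⟨hB, _⟩ | hB
      · exact Or.inl ⟨hA, hB⟩
      · exact (hC.false (g hB.some)).elim
    · exact Or.inr hA
  · by_cases hA : Nonempty A
    · exact ⟨A × B, fun a => (a, f a), Prod.snd, fun a b h => (Prod.mk.injEq ..).mp h |>.1,
        Or.inr hA, Or.inl (fun b => ⟨(hA.some, b), rfl⟩), rfl⟩
    · exact ⟨A, id, f, fun _ _ h => h, Or.inl ⟨not_nonempty_iff.mp hA,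
        not_nonempty_iff.mp hA⟩, Or.inr (not_nonempty_iff.mp hA), rfl⟩
  · refine ⟨A ⊕ B, Sum.inl, Sum.elim f id, fun a b h => Sum.inl_injective h,
      fun b => ⟨Sum.inr b, rfl⟩, ?_, rfl⟩
    by_cases hB : Nonempty B
    · exact Or.inr ⟨Sum.inr hB.some⟩
    · by_cases hA : Nonempty A
      · exact Or.inr ⟨Sum.inl hA.some⟩
      · exact Or.inl ⟨⟨by rintro (a | b); exacts [absurd ⟨a⟩ hA, absurd ⟨b⟩ hB]⟩,
          not_nonempty_iff.mp hB⟩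
end
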